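/- Let Φ, Ψ : M_n(ℂ) → M_n(ℂ) be positive linear maps (mapping positive-semidefinite matrices to positive-semidefinite matrices). If Ψ - Φ is a positive map, then ‖Φ‖_K ≤ ‖Ψ‖_K, where ‖Φ‖_K² := ⟨Φ,Φ⟩_K = Σ_{i,j} tr(Φ(E_{ii})Φ(E_{jj})*) + Σ_{i≠j} tr(Φ(E_{ij})Φ(E_{ij})*). -/

import Mathlib

/-! For a character ψ of `ι → ZMod 3` put `v_ψ p = ψ (Pi.single p 1)` and `W_ψ = v_ψ v_ψ*`, a
rank-one positive matrix. Averaged over all ψ, the fourth moment `v_i v̄_j v̄_k v_l` is the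
indicator of the pairings `(i = j, k = l)` and `(i = k, j = l)`, which are exactly the index
patterns occurring in `⟨Φ, Ψ⟩_K`; this needs `2 ≠ 0` in `ZMod 3`, since for real phases `±1`
the pairing `(i = l, j = k)` would survive as well. Hence `⟨Φ, Ψ⟩_K` is a positive multiple of
`∑_ψ tr(Φ(W_ψ) Ψ(W_ψ)*)`, which is `≥ 0` for positive `Φ, Ψ` because the trace of a product of
two positive semidefinite matrices is `≥ 0`. Writing `Ψ = Φ + Δ` with `Δ` positive,
`‖Ψ‖_K² - ‖Φ‖_K² = ⟨Φ,Δ⟩_K + ⟨Δ,Φ⟩_K + ⟨Δ,Δ⟩_K ≥ 0`. -/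

open Matrix
open scoped ComplexOrder

/-- The K-inner product on maps of matrices. -/
noncomputable def Kip {n : ℕ}
    (Φ Ψ : Matrix (Fin n) (Fin n) ℂ → Matrix (Fin n) (Fin n) ℂ) : ℂ :=
  (∑ i, ∑ j, (Φ (Matrix.single i i 1) * (Ψ (Matrix.single j j 1))ᴴ).trace) +
    ∑ i, ∑ j, if i ≠ j then (Φ (Matrix.single i j 1) * (Ψ (Matrix.single i j 1))ᴴ).trace else 0

/-- The K-norm of a map of matrices. -/
noncomputable def Knorm {n : ℕ}
    (Φ : Matrix (Fin n) (Fin n) ℂ → Matrix (Fin n) (Fin n) ℂ) : ℝ :=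
  Real.sqrt (Kip Φ Φ).re

/-- A map of matrices is positive if it preserves positive semidefiniteness. -/
def IsPosMap {n : ℕ} (Φ : Matrix (Fin n) (Fin n) ℂ → Matrix (Fin n) (Fin n) ℂ) : Prop :=
  ∀ A : Matrix (Fin n) (Fin n) ℂ, A.PosSemidef → (Φ A).PosSemidef

theorem Pi.single_sub_single_sub_single_add_single_eq_zero_iff {ι R : Type*} [DecidableEq ι]
    [Ring R] (h2 : (2 : R) ≠ 0) {i j k l : ι} :
    (Pi.single i 1 - Pi.single j 1 - Pi.single k 1 + Pi.single l 1 : ι → R) = 0 ↔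
      (i = j ∧ k = l) ∨ (i = k ∧ j = l) := by
  have h1 : (1 : R) ≠ 0 := fun h => h2 (by rw [← one_add_one_eq_two, h, add_zero])
  have single_eq_iff {a b : ι} : (Pi.single a 1 - Pi.single b 1 : ι → R) = 0 ↔ a = b := by
    refine ⟨fun h => by_contra fun hab => h1 ?_, fun h => by rw [h, sub_self]⟩
    simpa [Pi.single_apply, hab] using congrFun h a
  constructor
  · intro h
    by_cases hij : i = j
    · subst hij
      exact .inl ⟨rfl, (single_eq_iff.mp (by rw [← h]; abel)).symm⟩
    by_cases hik : i = k
    · subst hik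
      exact .inr ⟨rfl, (single_eq_iff.mp (by rw [← h]; abel)).symm⟩
    have hi := congrFun h i
    by_cases hil : i = l
    · subst hil
      exact absurd (by simpa [Pi.single_apply, hij, hik, one_add_one_eq_two] using hi) h2
    · exact absurd (by simpa [Pi.single_apply, hij, hik, hil] using hi) h1
  · rintro (⟨rfl, rfl⟩ | ⟨rfl, rfl⟩) <;> abel

theorem Finset.sum_ite_pairing {ι M : Type*} [Fintype ι] [DecidableEq ι] [AddCommGroup M]
    (f : ι → ι → ι → ι → M) :
    ∑ i, ∑ j, ∑ k, ∑ l, (if (i = j ∧ k = l) ∨ (i = k ∧ j = l) then f i j k l else 0) =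
      ∑ i, ∑ k, f i i k k + ∑ i, ∑ j, if i ≠ j then f i j i j else 0 := by
  have split (i j k l : ι) : (if (i = j ∧ k = l) ∨ (i = k ∧ j = l) then f i j k l else 0) =
      (if k = l ∧ i = j then f i j k l else 0) +
        if j = l ∧ i = k ∧ i ≠ j then f i j k l else 0 := by
    by_cases hij : i = j <;> by_cases hik : i = k <;> by_cases hjl : j = l <;> by_cases hkl : k = l <;>
      simp_all
  simp only [split, Finset.sum_add_distrib, ite_and, Finset.sum_ite_eq, Finset.sum_ite_irrel,
    Finset.mem_univ, if_true, Finset.sum_const_zero]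

theorem Matrix.trace_map_vecMulVec_mul_conjTranspose {ι R : Type*} [Fintype ι] [DecidableEq ι]
    [CommRing R] [StarRing R] (Φ Ψ : Matrix ι ι R →ₗ[R] Matrix ι ι R) (v : ι → R) :
    (Φ (vecMulVec v (star v)) * (Ψ (vecMulVec v (star v)))ᴴ).trace =
      ∑ i, ∑ j, ∑ k, ∑ l, v i * star (v j) * star (v k) * v l *
        (Φ (single i j 1) * (Ψ (single k l 1))ᴴ).trace := by
  have hW : vecMulVec v (star v) = ∑ i, ∑ j, (v i * star (v j)) • single i j (1 : R) := by
    conv_lhs => rw [matrix_eq_sum_single (vecMulVec v (star v))]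
    simp [vecMulVec_apply, smul_single]
  simp only [hW, map_sum, map_smul, conjTranspose_sum, conjTranspose_smul, Finset.sum_mul]
  simp only [Finset.mul_sum, smul_mul_smul_comm, trace_sum, trace_smul, smul_eq_mul, star_mul',
    star_star]
  refine Finset.sum_congr rfl fun i _ => Finset.sum_congr rfl fun j _ =>
    Finset.sum_congr rfl fun k _ => Finset.sum_congr rfl fun l _ => ?_
  ring

theorem Matrix.PosSemidef.trace_mul_nonneg {ι : Type*} [Fintype ι] {A B : Matrix ι ι ℂ}
    (hA : A.PosSemidef) (hB : B.PosSemidef) : 0 ≤ (A * B).trace := by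
  classical
  open scoped MatrixOrder in
  obtain ⟨C, rfl⟩ := CStarAlgebra.nonneg_iff_eq_star_mul_self.mp hA.nonneg
  rw [star_eq_conjTranspose, Matrix.mul_assoc, trace_mul_comm]
  exact (hB.mul_mul_conjTranspose_same C).trace_nonneg

namespace AddChar

variable {ι R : Type*} [Fintype ι] [DecidableEq ι] [Ring R] [Fintype R] [DecidableEq R]

def coordVec (ψ : AddChar (ι → R) ℂ) : ι → ℂ := fun p => ψ (Pi.single p 1)

theorem sum_coordVec_fourth_moment (h2 : (2 : R) ≠ 0) (i j k l : ι) :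
    ∑ ψ : AddChar (ι → R) ℂ,
        ψ.coordVec i * star (ψ.coordVec j) * star (ψ.coordVec k) * ψ.coordVec l =
      if (i = j ∧ k = l) ∨ (i = k ∧ j = l) then (Fintype.card (ι → R) : ℂ) else 0 := by
  have hψ (ψ : AddChar (ι → R) ℂ) :
      ψ.coordVec i * star (ψ.coordVec j) * star (ψ.coordVec k) * ψ.coordVec l =
        ψ (Pi.single i 1 - Pi.single j 1 - Pi.single k 1 + Pi.single l 1) := by
    simp only [coordVec, sub_eq_add_neg, map_add_eq_mul, map_neg_eq_conj]
    rfl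
  simp only [hψ, sum_apply_eq_ite, Pi.single_sub_single_sub_single_add_single_eq_zero_iff h2]

end AddChar

theorem card_mul_Kip_eq_sum_trace {n : ℕ}
    (Φ Ψ : Matrix (Fin n) (Fin n) ℂ →ₗ[ℂ] Matrix (Fin n) (Fin n) ℂ) :
    (Fintype.card (Fin n → ZMod 3) : ℂ) * Kip Φ Ψ =
      ∑ ψ : AddChar (Fin n → ZMod 3) ℂ,
        (Φ (vecMulVec ψ.coordVec (star ψ.coordVec)) *
          (Ψ (vecMulVec ψ.coordVec (star ψ.coordVec)))ᴴ).trace := by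
  simp only [trace_map_vecMulVec_mul_conjTranspose]
  simp only [Finset.sum_comm (s := (Finset.univ : Finset (AddChar (Fin n → ZMod 3) ℂ)))]
  simp only [← Finset.sum_mul, AddChar.sum_coordVec_fourth_moment (by decide : (2 : ZMod 3) ≠ 0),
    ite_mul, zero_mul]
  rw [Finset.sum_ite_pairing]
  simp only [Kip, mul_add, Finset.mul_sum, mul_ite, mul_zero]

theorem Kip_nonneg {n : ℕ} {Φ Ψ : Matrix (Fin n) (Fin n) ℂ →ₗ[ℂ] Matrix (Fin n) (Fin n) ℂ}
    (hΦ : IsPosMap Φ) (hΨ : IsPosMap Ψ) : 0 ≤ Kip Φ Ψ := by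
  have hterm (ψ : AddChar (Fin n → ZMod 3) ℂ) :
      0 ≤ (Φ (vecMulVec ψ.coordVec (star ψ.coordVec)) *
        (Ψ (vecMulVec ψ.coordVec (star ψ.coordVec)))ᴴ).trace := by
    have hW := posSemidef_vecMulVec_self_star ψ.coordVec
    rw [(hΨ _ hW).isHermitian.eq]
    exact (hΦ _ hW).trace_mul_nonneg (hΨ _ hW)
  have hsum : 0 ≤ (Fintype.card (Fin n → ZMod 3) : ℂ) * Kip Φ Ψ := by
    rw [card_mul_Kip_eq_sum_trace]
    exact Finset.sum_nonneg fun ψ _ => hterm ψ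
  have hcard : (0 : ℂ) < Fintype.card (Fin n → ZMod 3) := Nat.cast_pos.mpr Fintype.card_pos
  simpa only [inv_mul_cancel_left₀ hcard.ne'] using mul_nonneg (inv_nonneg.mpr hcard.le) hsum

theorem Kip_add_left {n : ℕ} (Φ₁ Φ₂ Ψ : Matrix (Fin n) (Fin n) ℂ → Matrix (Fin n) (Fin n) ℂ) :
    Kip (Φ₁ + Φ₂) Ψ = Kip Φ₁ Ψ + Kip Φ₂ Ψ := by
  simp only [Kip, Pi.add_apply, Matrix.add_mul, trace_add, ne_eq, ite_not, ite_zero_add,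
    Finset.sum_add_distrib]
  abel

theorem Kip_add_right {n : ℕ} (Φ Ψ₁ Ψ₂ : Matrix (Fin n) (Fin n) ℂ → Matrix (Fin n) (Fin n) ℂ) :
    Kip Φ (Ψ₁ + Ψ₂) = Kip Φ Ψ₁ + Kip Φ Ψ₂ := by
  simp only [Kip, Pi.add_apply, conjTranspose_add, Matrix.mul_add, trace_add, ne_eq, ite_not,
    ite_zero_add, Finset.sum_add_distrib]
  abel

theorem Knorm_mono_general {n : ℕ}
    (Φ Ψ : Matrix (Fin n) (Fin n) ℂ →ₗ[ℂ] Matrix (Fin n) (Fin n) ℂ)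
    (hΦ : IsPosMap ⇑Φ) (hΦΨ : IsPosMap ⇑(Ψ - Φ)) :
    Knorm ⇑Φ ≤ Knorm ⇑Ψ := by
  obtain ⟨Δ, rfl⟩ : ∃ Δ, Ψ = Φ + Δ := ⟨Ψ - Φ, (add_sub_cancel Φ Ψ).symm⟩
  rw [add_sub_cancel_left] at hΦΨ
  have hexpand : Kip ⇑(Φ + Δ) ⇑(Φ + Δ) = Kip Φ Φ + (Kip Φ Δ + Kip Δ Φ + Kip Δ Δ) := by
    rw [show ⇑(Φ + Δ) = ⇑Φ + ⇑Δ from rfl, Kip_add_left, Kip_add_right, Kip_add_right]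
    abel
  have hcross : 0 ≤ Kip Φ Δ + Kip Δ Φ + Kip Δ Δ :=
    add_nonneg (add_nonneg (Kip_nonneg hΦ hΦΨ) (Kip_nonneg hΦΨ hΦ)) (Kip_nonneg hΦΨ hΦΨ)
  refine Real.sqrt_le_sqrt ?_
  rw [hexpand, Complex.add_re]
  exact le_add_of_nonneg_right (Complex.nonneg_iff.mp hcross).1

theorem Knorm_mono {n : ℕ}
    (Φ Ψ : Matrix (Fin n) (Fin n) ℂ →ₗ[ℂ] Matrix (Fin n) (Fin n) ℂ)
    (hΦ : IsPosMap ⇑Φ) (hΨ : IsPosMap ⇑Ψ) (hΦΨ : IsPosMap ⇑(Ψ - Φ)) :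
    Knorm ⇑Φ ≤ Knorm ⇑Ψ :=
  Knorm_mono_general Φ Ψ hΦ hΦΨ
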